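/- arXiv:1909.00207 — 4 statements merged into one kernel-verified Lean document; each statement's English description precedes it below -/
import Mathlib

section
/- For all q, the total numbers of planes in PG(3,q) meeting the twisted cubic C in exactly d points are: n0 = q(q^2-1)/3 planes with d=0, n1 = (q^3+q+2)/2 planes with d=1, n2 = q(q+1) planes with d=2, and n3 = q(q^2-1)/6 planes with d=3; these sum to q^3+q^2+q+1, the total number of planes of PG(3,q). -/
open Projectivization

noncomputable section

variable (F : Type*) [Field F]

lemma cubic_ne_zero (t : F) : ![t^3, t^2, t, 1] ≠ 0 := by
  intro h; have := congrFun h 3; simp at this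

lemma e0_ne_zero : (![1, 0, 0, 0] : Fin 4 → F) ≠ 0 := by
  intro h; have := congrFun h 0; simp at this

/-- The twisted cubic in `PG(3,q)`, in canonical form. -/
def twistedCubic : Set (Projectivization F (Fin 4 → F)) :=
  {x | (∃ t : F, x = Projectivization.mk F ![t^3, t^2, t, 1] (cubic_ne_zero F t)) ∨
    x = Projectivization.mk F ![1, 0, 0, 0] (e0_ne_zero F)}

/-- The set of projective points lying in a linear subspace `W`. -/
def planePts (W : Submodule F (Fin 4 → F)) : Set (Projectivization F (Fin 4 → F)) :=
  {x | x.submodule ≤ W}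

/-!
Parametrize `C` by `ℙ¹ = Option F`. A nonzero cubic polynomial vanishing at three parameters but
not at a fourth gives a linear form separating the corresponding points, so any four points of `C`
are linearly independent. Hence a plane meets `C` in at most three points, and any `j ≤ 3` points of
`C` span a `j`-dimensional subspace, which lies in `1 + q + ⋯ + q^(3-j)` planes (dually, the points
of a projective space of dimension `3 - j`). Counting pairs (plane, `j`-subset of `C` in it) gives
`∑_d n_d C(d, j) = C(q + 1, j) (1 + q + ⋯ + q^(3-j))` for `j = 0, …, 3`, a triangular system
whose solution is the claimed `n_d`.
-/

open Module Finset

namespace Submodule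

theorem natCard_finrank_eq_and_le {R V : Type*} [Ring R] [AddCommGroup V] [Module R V]
    (M : Submodule R V) (d : ℕ) :
    Nat.card {L : Submodule R V // finrank R L = d ∧ L ≤ M} =
      Nat.card {L : Submodule R M // finrank R L = d} := by
  refine Nat.card_congr <| (Equiv.subtypeEquivRight fun _ => and_comm).trans <|
    (Equiv.subtypeSubtypeEquivSubtypeInter (· ≤ M) fun L => finrank R L = d).symm.trans ?_
  exact ((MapSubtype.orderIso M).toEquiv.subtypeEquiv
    (p := fun L : Submodule R M => finrank R L = d)
    (q := fun L : {L : Submodule R V // L ≤ M} => finrank R L.1 = d) fun L => by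
      change _ ↔ finrank R (L.map M.subtype) = d
      rw [finrank_map_subtype_eq]).symm

end Submodule

namespace Subspace

variable {K V : Type*} [Field K] [AddCommGroup V] [Module K V] [FiniteDimensional K V]

theorem natCard_hyperplanes_containing [Finite K] (U : Submodule K V) :
    Nat.card {W : Submodule K V // finrank K W + 1 = finrank K V ∧ U ≤ W} =
      ∑ i ∈ range (finrank K V - finrank K U), Nat.card K ^ i := by
  have hM : finrank K U.dualAnnihilator = finrank K V - finrank K U := by
    have := finrank_add_finrank_dualAnnihilator_eq U; omega
  calc _ = Nat.card {L : Submodule K (Dual K V) // finrank K L = 1 ∧ L ≤ U.dualAnnihilator} :=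
        Nat.card_congr <| orderIsoFiniteDimensional.toEquiv.subtypeEquiv fun W => by
          have := finrank_add_finrank_dualAnnihilator_eq W
          refine and_congr (by change _ ↔ finrank K W.dualAnnihilator = 1; omega) ?_
          exact dualAnnihilator_le_dualAnnihilator_iff.symm
    _ = Nat.card {L : Submodule K U.dualAnnihilator // finrank K L = 1} :=
        Submodule.natCard_finrank_eq_and_le (R := K) (V := Dual K V) U.dualAnnihilator 1
    _ = Nat.card (Projectivization K U.dualAnnihilator) :=
        (Nat.card_congr (Projectivization.equivSubmodule K U.dualAnnihilator)).symm
    _ = _ := Projectivization.card_of_finrank K U.dualAnnihilator hM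

end Subspace

theorem Finset.sum_choose_card_eq_sum_card_filter_subset {ι α : Type*} [DecidableEq α] [Fintype α]
    (s : Finset ι) (S : ι → Finset α) (j : ℕ) :
    ∑ i ∈ s, (#(S i)).choose j = ∑ t ∈ powersetCard j univ, #{i ∈ s | t ⊆ S i} := by
  refine (sum_congr rfl fun i _ => ?_).trans
    (sum_card_bipartiteAbove_eq_sum_card_bipartiteBelow (r := fun i t => t ⊆ S i))
  rw [← card_powersetCard]
  congr 1
  ext t
  simp [mem_powersetCard, bipartiteAbove, and_comm]

namespace TwistedCubic

open Polynomial

variable {F}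

def vec : Option F → Fin 4 → F
  | some t => ![t ^ 3, t ^ 2, t, 1]
  | none => ![1, 0, 0, 0]

lemma vec_ne_zero (o : Option F) : vec o ≠ 0 := by
  intro h
  cases o
  · simpa [vec] using congrFun h 0
  · simpa [vec] using congrFun h 3

def point (o : Option F) : Projectivization F (Fin 4 → F) :=
  Projectivization.mk F (vec o) (vec_ne_zero o)

lemma point_injective : Function.Injective (point (F := F)) := by
  intro o o' h
  obtain ⟨a, ha⟩ := (Projectivization.mk_eq_mk_iff _ _ _ _ _).1 h
  have h3 := congrFun ha 3
  have h2 := congrFun ha 2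
  cases o <;> cases o' <;> simp_all [vec, Units.smul_def]

lemma twistedCubic_eq_range : twistedCubic F = Set.range point := by
  ext x
  simp only [twistedCubic, Set.mem_ofPred_eq, Set.mem_range, Option.exists]
  constructor
  · rintro (⟨t, rfl⟩ | rfl)
    exacts [Or.inr ⟨t, rfl⟩, Or.inl rfl]
  · rintro (h | ⟨t, h⟩) <;> subst h
    exacts [Or.inr rfl, Or.inl ⟨t, rfl⟩]

lemma point_mem_planePts {o : Option F} {W : Submodule F (Fin 4 → F)} :
    point o ∈ planePts F W ↔ vec o ∈ W := by
  simp [planePts, point, Submodule.span_singleton_le_iff_mem]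

def dualOfPoly (P : F[X]) : Module.Dual F (Fin 4 → F) :=
  ∑ i : Fin 4, P.coeff (3 - i) • LinearMap.proj i

lemma dualOfPoly_vec_some {P : F[X]} (hP : P.natDegree ≤ 3) (t : F) :
    dualOfPoly P (vec (some t)) = P.eval t := by
  rw [eval_eq_sum_range' (n := 4) (by omega)]
  simp [dualOfPoly, vec, Fin.sum_univ_four, sum_range_succ]
  ring

lemma dualOfPoly_vec_none (P : F[X]) : dualOfPoly P (vec none) = P.coeff 3 := by
  simp [dualOfPoly, vec, Fin.sum_univ_four]

lemma exists_dualOfPoly_separating {s : Finset (Option F)} (hs : #s ≤ 4) {o : Option F}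
    (ho : o ∈ s) : ∃ P : F[X], P.natDegree ≤ 3 ∧ dualOfPoly P (vec o) ≠ 0 ∧
      ∀ o' ∈ s, o' ≠ o → dualOfPoly P (vec o') = 0 := by
  classical
  have hT := card_eraseNone_le s
  cases o with
  | none =>
    have hT3 : #s.eraseNone ≤ 3 := by rw [card_eraseNone_of_mem ho]; omega
    set P := X ^ (3 - #s.eraseNone) * Lagrange.nodal s.eraseNone id
    have hmonic : P.Monic := (monic_X_pow _).mul Lagrange.nodal_monic
    have hdeg : P.natDegree = 3 := by
      rw [(monic_X_pow _).natDegree_mul Lagrange.nodal_monic, natDegree_X_pow,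
        Lagrange.natDegree_nodal]
      omega
    refine ⟨P, hdeg.le, ?_, ?_⟩
    · rw [dualOfPoly_vec_none, ← hdeg, hmonic.coeff_natDegree]
      exact one_ne_zero
    · rintro (_ | t) ht hne
      · exact absurd rfl hne
      · rw [dualOfPoly_vec_some hdeg.le, eval_mul, ← id_eq t,
          Lagrange.eval_nodal_at_node (mem_eraseNone.2 ht), mul_zero]
  | some t₀ =>
    have hdeg : (Lagrange.nodal (s.eraseNone.erase t₀) id).natDegree = #s.eraseNone - 1 := by
      rw [Lagrange.natDegree_nodal, card_erase_of_mem (mem_eraseNone.2 ho)]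
    refine ⟨_, hdeg.trans_le (by omega), ?_, ?_⟩
    · rw [dualOfPoly_vec_some (by omega)]
      exact Lagrange.eval_nodal_not_at_node fun t ht => (ne_of_mem_erase ht).symm
    · rintro (_ | t) ht hne
      · rw [dualOfPoly_vec_none]
        refine coeff_eq_zero_of_natDegree_lt ?_
        rw [hdeg, card_eraseNone_of_mem ht]
        omega
      · rw [dualOfPoly_vec_some (by omega), ← id_eq t]
        exact Lagrange.eval_nodal_at_node
          (mem_erase.2 ⟨fun h => hne (congrArg some h), mem_eraseNone.2 ht⟩)

lemma linearIndependent_vec {s : Finset (Option F)} (hs : #s ≤ 4) :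
    LinearIndependent F fun o : s => vec (o : Option F) := by
  choose P _ hP hP' using fun o : s => exists_dualOfPoly_separating hs o.2
  refine .of_pairwise_dual_eq_zero_one _ (fun o => (dualOfPoly (P o) (vec o))⁻¹ • dualOfPoly (P o))
    (fun o o' hne => ?_) fun o => inv_mul_cancel₀ (hP o)
  simp [hP' o o' o'.2 (Subtype.coe_ne_coe.2 hne.symm)]

lemma finrank_span_vec {s : Finset (Option F)} (hs : #s ≤ 4) :
    finrank F (Submodule.span F (vec '' (s : Set (Option F)))) = #s := by
  have hrange : vec '' (s : Set (Option F)) = Set.range fun o : s => vec (o : Option F) := by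
    ext; simp
  rw [hrange, finrank_span_eq_card (linearIndependent_vec hs), Fintype.card_coe]

variable [Fintype F]

open scoped Classical in
def params (W : Submodule F (Fin 4 → F)) : Finset (Option F) :=
  {o | vec o ∈ W}

lemma mem_params {W : Submodule F (Fin 4 → F)} {o : Option F} : o ∈ params W ↔ vec o ∈ W := by
  simp [params]

lemma ncard_twistedCubic_inter_planePts (W : Submodule F (Fin 4 → F)) :
    (twistedCubic F ∩ planePts F W).ncard = #(params W) := by
  have : twistedCubic F ∩ planePts F W = point '' params W := by
    ext x
    simp only [twistedCubic_eq_range, Set.mem_inter_iff, Set.mem_image, Finset.mem_coe, mem_params]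
    constructor
    · rintro ⟨⟨o, rfl⟩, h⟩
      exact ⟨o, point_mem_planePts.1 h, rfl⟩
    · rintro ⟨o, h, rfl⟩
      exact ⟨⟨o, rfl⟩, point_mem_planePts.2 h⟩
  rw [this, Set.ncard_image_of_injective _ point_injective, Set.ncard_coe_finset]

lemma span_vec_le_iff {s : Finset (Option F)} {W : Submodule F (Fin 4 → F)} :
    Submodule.span F (vec '' (s : Set (Option F))) ≤ W ↔ s ⊆ params W := by
  rw [Submodule.span_le, Set.image_subset_iff]
  exact ⟨fun h o ho => mem_params.2 (h ho), fun h o ho => mem_params.1 (h ho)⟩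

lemma card_params_le_finrank {W : Submodule F (Fin 4 → F)} (hW : finrank F W < 4) :
    #(params W) ≤ finrank F W := by
  by_contra! h
  obtain ⟨s, hs, hcard⟩ := exists_subset_card_eq (Nat.succ_le_of_lt h)
  have := Submodule.finrank_mono (span_vec_le_iff.2 hs)
  rw [finrank_span_vec (by omega)] at this
  omega

lemma natCard_planes_subset_params {s : Finset (Option F)} (hs : #s ≤ 3) :
    Nat.card {W : Submodule F (Fin 4 → F) // finrank F W = 3 ∧ s ⊆ params W} =
      ∑ i ∈ range (4 - #s), Fintype.card F ^ i := by
  have := Subspace.natCard_hyperplanes_containing (Submodule.span F (vec '' (s : Set (Option F))))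
  rw [finrank_span_vec (by omega), finrank_fin_fun, Nat.card_eq_fintype_card (α := F)] at this
  rw [← this]
  exact Nat.card_congr <| Equiv.subtypeEquivRight fun W => by
    rw [span_vec_le_iff]
    exact and_congr_left' ⟨fun h => by omega, fun h => by omega⟩

variable (F) in
def numPlanesMeeting (d : ℕ) : ℕ :=
  Nat.card {W : Submodule F (Fin 4 → F) //
    finrank F W = 3 ∧ (twistedCubic F ∩ planePts F W).ncard = d}

lemma sum_numPlanesMeeting_mul_choose {j : ℕ} (hj : j ≤ 3) :
    ∑ d ∈ range 4, numPlanesMeeting F d * d.choose j =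
      (Fintype.card F + 1).choose j * ∑ i ∈ range (4 - j), Fintype.card F ^ i := by
  classical
  let _ : Fintype (Submodule F (Fin 4 → F)) := Fintype.ofFinite _
  let planes : Finset (Submodule F (Fin 4 → F)) := {W | finrank F W = 3}
  have hmeet (d : ℕ) : numPlanesMeeting F d = #{W ∈ planes | #(params W) = d} := by
    simp only [numPlanesMeeting, ncard_twistedCubic_inter_planePts, Nat.card_eq_fintype_card,
      Fintype.card_subtype, filter_filter, planes]
  have hmaps : ∀ W ∈ planes, #(params W) ∈ range 4 := fun W hW => by
    have hW3 : finrank F W = 3 := (mem_filter.1 hW).2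
    exact mem_range.2 (Nat.lt_succ_of_le (hW3 ▸ card_params_le_finrank (by omega)))
  have hthrough : ∀ s ∈ powersetCard j univ,
      #{W ∈ planes | s ⊆ params W} = ∑ i ∈ range (4 - j), Fintype.card F ^ i := by
    intro s hs
    rw [mem_powersetCard] at hs
    rw [← hs.2, ← natCard_planes_subset_params (by omega), Nat.card_eq_fintype_card,
      Fintype.card_subtype, filter_filter]
  calc ∑ d ∈ range 4, numPlanesMeeting F d * d.choose j
      = ∑ W ∈ planes, (#(params W)).choose j := by
        rw [← sum_fiberwise_of_maps_to hmaps]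
        refine sum_congr rfl fun d _ => ?_
        rw [hmeet, sum_const_nat fun W hW => by rw [(mem_filter.1 hW).2]]
    _ = ∑ s ∈ powersetCard j univ, #{W ∈ planes | s ⊆ params W} :=
        sum_choose_card_eq_sum_card_filter_subset planes params j
    _ = _ := by
        rw [sum_congr rfl hthrough, sum_const, card_powersetCard, card_univ, Fintype.card_option,
          smul_eq_mul]

theorem counts_of_binomial_moments {q : ℕ} (hq : 1 ≤ q) (n : ℕ → ℕ)
    (h : ∀ j ≤ 3, ∑ d ∈ range 4, n d * d.choose j =
      (q + 1).choose j * ∑ i ∈ range (4 - j), q ^ i) :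
    n 0 = q * (q ^ 2 - 1) / 3 ∧ n 1 = (q ^ 3 + q + 2) / 2 ∧ n 2 = q * (q + 1) ∧
      n 3 = q * (q ^ 2 - 1) / 6 ∧
      q * (q ^ 2 - 1) / 3 + (q ^ 3 + q + 2) / 2 + q * (q + 1) + q * (q ^ 2 - 1) / 6 =
        q ^ 3 + q ^ 2 + q + 1 := by
  have h0 := h 0 (by norm_num)
  have h1 := h 1 (by norm_num)
  have h2 := h 2 (by norm_num)
  have h3 := h 3 (by norm_num)
  have a2 := Nat.add_one_mul_choose_eq q 1
  have a3 := Nat.add_one_mul_choose_eq q 2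
  have b2 := Nat.add_one_mul_choose_eq (q - 1) 1
  rw [Nat.sub_add_cancel hq] at b2
  norm_num [sum_range_succ, Nat.choose_eq_zero_of_lt] at h0 h1 h2 h3 a2 a3 b2
  have hq2 := Nat.one_le_pow 2 q hq
  have e3 : q * (q ^ 2 - 1) = 6 * n 3 := by
    qify [hq, hq2] at *
    linear_combination -6 * h3 + 2 * a3 + (q + 1) * b2
  have e2 : n 2 = q * (q + 1) := by
    qify [hq, hq2] at *
    linear_combination h2 - (1 + q) * a2 / 2 + e3 / 2
  have e1 : q ^ 3 + q + 2 = 2 * n 1 := by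
    qify [hq, hq2] at *
    linear_combination -2 * h1 + 4 * e2 - e3
  have e0 : q * (q ^ 2 - 1) = 3 * n 0 := by
    qify [hq, hq2] at *
    linear_combination -3 * h0 - 3 / 2 * e1 + 3 * e2 - e3 / 2
  have d0 : q * (q ^ 2 - 1) / 3 = n 0 := by rw [e0, Nat.mul_div_cancel_left _ three_pos]
  have d1 : (q ^ 3 + q + 2) / 2 = n 1 := by rw [e1, Nat.mul_div_cancel_left _ two_pos]
  have d3 : q * (q ^ 2 - 1) / 6 = n 3 := by rw [e3, Nat.mul_div_cancel_left _ (by norm_num)]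
  refine ⟨d0.symm, d1.symm, e2, d3.symm, ?_⟩
  rw [d0, d1, d3, ← e2]
  linarith

end TwistedCubic

/-- The total numbers of planes of `PG(3,q)` meeting the twisted cubic `C` in exactly `d`
points are `q(q²-1)/3` for `d=0`, `(q³+q+2)/2` for `d=1`, `q(q+1)` for `d=2`, and
`q(q²-1)/6` for `d=3`; these sum to `q³+q²+q+1`, the total number of planes. -/
theorem stmt4 (q : ℕ) [Fintype F] (hq : Fintype.card F = q) :
    Nat.card {W : Submodule F (Fin 4 → F) // Module.finrank F W = 3 ∧
        (twistedCubic F ∩ planePts F W).ncard = 0} = q * (q ^ 2 - 1) / 3 ∧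
    Nat.card {W : Submodule F (Fin 4 → F) // Module.finrank F W = 3 ∧
        (twistedCubic F ∩ planePts F W).ncard = 1} = (q ^ 3 + q + 2) / 2 ∧
    Nat.card {W : Submodule F (Fin 4 → F) // Module.finrank F W = 3 ∧
        (twistedCubic F ∩ planePts F W).ncard = 2} = q * (q + 1) ∧
    Nat.card {W : Submodule F (Fin 4 → F) // Module.finrank F W = 3 ∧
        (twistedCubic F ∩ planePts F W).ncard = 3} = q * (q ^ 2 - 1) / 6 ∧
    q * (q ^ 2 - 1) / 3 + (q ^ 3 + q + 2) / 2 + q * (q + 1) + q * (q ^ 2 - 1) / 6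
      = q ^ 3 + q ^ 2 + q + 1 := by
  subst hq
  exact TwistedCubic.counts_of_binomial_moments Fintype.card_pos (TwistedCubic.numPlanesMeeting F)
    fun _ hj => TwistedCubic.sum_numPlanesMeeting_mul_choose hj
end
end

section
/- Let q ≡ 1 (mod 3) and let T be the multiset of all products t1·t2·t3 of three pairwise distinct elements of F_q^* (of total size C(q-1,3)). Then the number of elements of T that are nonzero cubes in F_q equals ((q-1)/3)·((q^2-5q+10)/6), and the number that are non-cubes equals (2(q-1)/3)·((q^2-5q+4)/6). -/
/-!
Let `G = F_qˣ`, cyclic of order `3m`, and `H ≤ G` the subgroup of cubes, of order `m`. Each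
3-subset of `G` is the underlying set of exactly six ordered triples of distinct elements, so it
suffices to count those triples `(a, b, c)` with `abc ∈ H`. For fixed `a ≠ b` there are `m`
elements `c` with `abc ∈ H`; the two forbidden values `c = a` and `c = b` are among them together
or not at all, because `a²b · ab² = (ab)³ ∈ H`, and for fixed `a` this happens for `m - 1` values
of `b` (those with `a²b ∈ H`, except `b = a`). Hence there are `3m(3m - 1)m - 6m(m - 1)` such
triples, i.e. `m(3·C(m, 2) + 1)` cube subsets; the non-cube subsets are the rest of `C(3m, 3)`.
-/

open Finset

theorem Nat.two_mul_choose_two (n : ℕ) : 2 * n.choose 2 = n * (n - 1) := by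
  rw [Nat.choose_two_right, Nat.mul_div_cancel' (Nat.even_mul_pred_self n).two_dvd]

theorem Nat.six_mul_choose_three (n : ℕ) : 6 * n.choose 3 = n * (n - 1) * (n - 2) := by
  rw [show 6 = Nat.factorial 3 from rfl, ← Nat.descFactorial_eq_factorial_mul_choose]
  simp only [Nat.descFactorial, Nat.sub_zero, mul_one]
  ring

namespace Finset

variable {α : Type*}

theorem natCard_card_eq_and_eq_card_filter [Fintype α] (k : ℕ) (Q : Finset α → Prop)
    [DecidablePred Q] :
    Nat.card {t : Finset α // t.card = k ∧ Q t} = #{t ∈ (univ : Finset α).powersetCard k | Q t} := by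
  rw [Nat.card_eq_fintype_card, Fintype.card_subtype, powersetCard_eq_filter, powerset_univ,
    filter_filter]

variable [DecidableEq α]

def distinctTriples (s : Finset α) : Finset (α × α × α) :=
  {x ∈ s ×ˢ s ×ˢ s | x.1 ≠ x.2.1 ∧ x.1 ≠ x.2.2 ∧ x.2.1 ≠ x.2.2}

theorem mem_distinctTriples {s : Finset α} {x : α × α × α} :
    x ∈ s.distinctTriples ↔
      (x.1 ∈ s ∧ x.2.1 ∈ s ∧ x.2.2 ∈ s) ∧ x.1 ≠ x.2.1 ∧ x.1 ≠ x.2.2 ∧ x.2.1 ≠ x.2.2 := by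
  simp [distinctTriples]

theorem card_filter_distinctTriples (s : Finset α) (p : α × α × α → Prop) [DecidablePred p] :
    #{x ∈ s.distinctTriples | p x} =
      ∑ a ∈ s, ∑ b ∈ s.erase a, #{c ∈ (s.erase a).erase b | p (a, b, c)} := by
  simp only [card_filter]
  rw [sum_finset_product _ s (fun a => (s.erase a).offDiag) fun x => by
    simp only [mem_distinctTriples, mem_offDiag, mem_erase]; grind]
  refine sum_congr rfl fun a _ => sum_finset_product _ _ _ fun x => ?_
  simp only [mem_offDiag, mem_erase]
  grind

theorem card_distinctTriples (s : Finset α) :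
    #s.distinctTriples = #s * (#s - 1) * (#s - 2) := by
  have h := card_filter_distinctTriples s fun _ => True
  simp only [filter_true] at h
  rw [h, sum_const_nat fun a ha => ?_, mul_assoc]
  rw [sum_const_nat fun b hb => ?_]
  · rw [card_erase_of_mem ha]
  · rw [card_erase_of_mem hb, card_erase_of_mem ha, Nat.sub_sub]

theorem distinctTriples_mono {s t : Finset α} (h : t ⊆ s) :
    t.distinctTriples ⊆ s.distinctTriples :=
  filter_subset_filter _ (product_subset_product h (product_subset_product h h))

theorem insert_insert_singleton_eq_of_mem_distinctTriples {s : Finset α} (hs : #s = 3)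
    {x : α × α × α} (hx : x ∈ s.distinctTriples) : {x.1, x.2.1, x.2.2} = s := by
  rw [mem_distinctTriples] at hx
  obtain ⟨⟨h1, h2, h3⟩, h12, h13, h23⟩ := hx
  refine eq_of_subset_of_card_le (by simp [insert_subset_iff, *]) ?_
  rw [hs, card_eq_three.mpr ⟨_, _, _, h12, h13, h23, rfl⟩]

theorem card_filter_distinctTriples_eq_six_mul (s : Finset α) (P : Finset α → Prop)
    [DecidablePred P] :
    #{x ∈ s.distinctTriples | P {x.1, x.2.1, x.2.2}} = 6 * #{t ∈ s.powersetCard 3 | P t} := by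
  have hmaps : ∀ x ∈ {x ∈ s.distinctTriples | P {x.1, x.2.1, x.2.2}},
      ({x.1, x.2.1, x.2.2} : Finset α) ∈ {t ∈ s.powersetCard 3 | P t} := by
    intro x hx
    rw [mem_filter, mem_distinctTriples] at hx
    obtain ⟨⟨⟨h1, h2, h3⟩, h12, h13, h23⟩, hP⟩ := hx
    simp only [mem_filter, mem_powersetCard]
    exact ⟨⟨by simp [insert_subset_iff, *], card_eq_three.mpr ⟨_, _, _, h12, h13, h23, rfl⟩⟩, hP⟩
  rw [card_eq_sum_card_fiberwise hmaps, mul_comm, ← smul_eq_mul, ← sum_const]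
  refine sum_congr rfl fun t ht => ?_
  rw [mem_filter, mem_powersetCard] at ht
  obtain ⟨⟨hts, ht3⟩, hPt⟩ := ht
  suffices {x ∈ {x ∈ s.distinctTriples | P {x.1, x.2.1, x.2.2}} | {x.1, x.2.1, x.2.2} = t}
      = t.distinctTriples by
    rw [this, card_distinctTriples, ht3]
  ext x
  simp only [mem_filter]
  constructor
  · rintro ⟨⟨hx, -⟩, rfl⟩
    rw [mem_distinctTriples] at hx ⊢
    exact ⟨by simp, hx.2⟩
  · intro hx
    have hxt := insert_insert_singleton_eq_of_mem_distinctTriples ht3 hx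
    exact ⟨⟨distinctTriples_mono hts hx, hxt ▸ hPt⟩, hxt⟩

end Finset

namespace Subgroup

variable {G : Type*} [CommGroup G] (H : Subgroup G)

theorem mul_mul_self_mem_iff_mul_self_mul_mem (hH : ∀ x : G, x ^ 3 ∈ H) (a b : G) :
    a * b * b ∈ H ↔ a * a * b ∈ H := by
  have hcube : a * a * b * (a * b * b) ∈ H := by
    convert hH (a * b) using 1
    simp only [pow_succ, pow_zero, one_mul]
    ac_rfl
  exact ⟨fun h => (H.mul_mem_cancel_right h).mp hcube, fun h => (H.mul_mem_cancel_left h).mp hcube⟩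

variable [Fintype G] [DecidablePred (· ∈ H)]

theorem card_filter_mul_mem (x : G) : #{c | x * c ∈ H} = Nat.card H := by
  rw [← Fintype.card_subtype, Nat.card_eq_fintype_card]
  exact Fintype.card_congr ((Equiv.mulLeft x).subtypeEquiv fun _ => Iff.rfl)

variable [DecidableEq G] (hH : ∀ x : G, x ^ 3 ∈ H)
include hH

theorem card_filter_erase_erase_mul_mem_add {a b : G} (hab : b ≠ a) :
    #{c ∈ (univ.erase a).erase b | a * b * c ∈ H} + 2 * (if a * a * b ∈ H then 1 else 0) =
      Nat.card H := by
  rw [filter_erase, filter_erase, ← H.card_filter_mul_mem (a * b)]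
  split_ifs with h
  · have ha : a ∈ ({c | a * b * c ∈ H} : Finset G) := by
      simpa [mul_right_comm a b a] using h
    have hb : b ∈ ({c | a * b * c ∈ H} : Finset G).erase a := by
      simpa [hab, H.mul_mul_self_mem_iff_mul_self_mul_mem hH] using h
    rw [← card_erase_add_one ha, ← card_erase_add_one hb]
  · rw [mul_zero, add_zero, erase_eq_of_notMem, erase_eq_of_notMem]
    · simpa [mul_right_comm a b a] using h
    · simpa [hab, H.mul_mul_self_mem_iff_mul_self_mul_mem hH] using h

theorem card_filter_distinctTriples_mul_mem_add :
    #{x ∈ (univ : Finset G).distinctTriples | x.1 * x.2.1 * x.2.2 ∈ H}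
        + 2 * (Fintype.card G * (Nat.card H - 1)) =
      Fintype.card G * (Fintype.card G - 1) * Nat.card H := by
  have hfirst (a : G) : ∑ b ∈ univ.erase a, #{c ∈ (univ.erase a).erase b | a * b * c ∈ H}
      + 2 * (Nat.card H - 1) = (Fintype.card G - 1) * Nat.card H := by
    have hsum := sum_congr rfl fun b (hb : b ∈ univ.erase a) =>
      H.card_filter_erase_erase_mul_mem_add hH (ne_of_mem_erase hb)
    have haa : a ∈ ({b | a * a * b ∈ H} : Finset G) := by simpa [pow_three, mul_assoc] using hH a
    rwa [sum_add_distrib, ← mul_sum, sum_boole, filter_erase, card_erase_of_mem haa,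
      card_filter_mul_mem, sum_const, card_erase_of_mem (mem_univ a), card_univ,
      smul_eq_mul] at hsum
  have htotal := sum_congr rfl fun a (_ : a ∈ univ) => hfirst a
  rw [sum_add_distrib, sum_const, sum_const, card_univ, smul_eq_mul, smul_eq_mul] at htotal
  rw [card_filter_distinctTriples]
  linarith

theorem six_mul_card_filter_powersetCard_prod_mem_add :
    6 * #{t ∈ (univ : Finset G).powersetCard 3 | ∏ x ∈ t, x ∈ H}
        + 2 * (Fintype.card G * (Nat.card H - 1)) =
      Fintype.card G * (Fintype.card G - 1) * Nat.card H := by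
  rw [← card_filter_distinctTriples_eq_six_mul, ← H.card_filter_distinctTriples_mul_mem_add hH]
  congr 2
  refine filter_congr fun x hx => ?_
  obtain ⟨-, h12, h13, h23⟩ := mem_distinctTriples.mp hx
  rw [prod_insert (by simp [h12, h13]), prod_pair h23, mul_assoc]

variable (hindex : Fintype.card G = 3 * Nat.card H)
include hindex

theorem card_filter_powersetCard_prod_mem :
    #{t ∈ (univ : Finset G).powersetCard 3 | ∏ x ∈ t, x ∈ H} =
      Nat.card H * (3 * (Nat.card H).choose 2 + 1) := by
  have hsix := H.six_mul_card_filter_powersetCard_prod_mem_add hH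
  have hchoose := Nat.two_mul_choose_two (Nat.card H)
  have hm : 1 ≤ Nat.card H := Nat.card_pos
  rw [hindex] at hsix
  zify [hm, show 1 ≤ 3 * Nat.card H by omega] at hsix hchoose ⊢
  refine mul_left_cancel₀ (show (6 : ℤ) ≠ 0 by norm_num) ?_
  linear_combination hsix - 9 * Nat.card H * hchoose

theorem card_filter_powersetCard_prod_notMem :
    #{t ∈ (univ : Finset G).powersetCard 3 | ∏ x ∈ t, x ∉ H} =
      6 * Nat.card H * (Nat.card H).choose 2 := by
  have hsplit := card_filter_add_card_filter_not (s := (univ : Finset G).powersetCard 3)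
    (fun t => ∏ x ∈ t, x ∈ H)
  rw [H.card_filter_powersetCard_prod_mem hH hindex, card_powersetCard, card_univ, hindex]
    at hsplit
  have hchoose := Nat.two_mul_choose_two (Nat.card H)
  have hchoose3 := Nat.six_mul_choose_three (3 * Nat.card H)
  have hm : 1 ≤ Nat.card H := Nat.card_pos
  zify [hm, show 1 ≤ 3 * Nat.card H by omega, show 2 ≤ 3 * Nat.card H by omega]
    at hsplit hchoose hchoose3 ⊢
  refine mul_left_cancel₀ (show (6 : ℤ) ≠ 0 by norm_num) ?_
  linear_combination 6 * hsplit + hchoose3 - 27 * Nat.card H * hchoose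

end Subgroup

section GroupWithZero

variable {M₀ : Type*}

theorem natCard_subtype_zero_notMem_eq_units [GroupWithZero M₀] (P : Finset M₀ → Prop) :
    Nat.card {s : Finset M₀ // 0 ∉ s ∧ P s} =
      Nat.card {t : Finset M₀ˣ // P (t.map ⟨Units.val, Units.val_injective⟩)} := by
  let e : Finset M₀ˣ ≃ {s : Finset M₀ // ∀ a ∈ s, a ≠ 0} :=
    unitsEquivNeZero.finsetCongr.trans (Equiv.finsetSubtypeComm _)
  have he : ∀ t, (e t : Finset M₀) = t.map ⟨Units.val, Units.val_injective⟩ := by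
    intro t; ext a
    simp only [e, Equiv.trans_apply, Equiv.finsetCongr_apply, Equiv.finsetSubtypeComm_apply_coe,
      mem_map, Function.Embedding.coeFn_mk]
    constructor
    · rintro ⟨_, ⟨u, hu, rfl⟩, rfl⟩
      exact ⟨u, hu, rfl⟩
    · rintro ⟨u, hu, rfl⟩
      exact ⟨_, ⟨u, hu, rfl⟩, rfl⟩
  rw [Nat.card_congr (e.subtypeEquiv fun t => (he t).symm ▸ Iff.rfl :
    {t : Finset M₀ˣ // P (t.map _)} ≃ {s : {s : Finset M₀ // ∀ a ∈ s, a ≠ 0} // P s})]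
  refine Nat.card_congr ((Equiv.subtypeSubtypeEquivSubtypeInter _ _).trans
    (Equiv.subtypeEquivRight fun s => ?_)).symm
  exact and_congr_left' ⟨fun h h0 => h 0 h0 rfl, fun h a ha ha0 => h (ha0 ▸ ha)⟩

theorem exists_pow_eq_units_val_iff [CommGroupWithZero M₀] {n : ℕ} (hn : n ≠ 0) (u : M₀ˣ) :
    (∃ y : M₀, y ^ n = u) ↔ u ∈ (powMonoidHom n : M₀ˣ →* M₀ˣ).range := by
  constructor
  · rintro ⟨y, hy⟩
    have hy0 : y ≠ 0 := by rintro rfl; exact u.ne_zero (by simpa [zero_pow hn] using hy.symm)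
    exact ⟨Units.mk0 y hy0, Units.ext (by simpa using hy)⟩
  · rintro ⟨v, rfl⟩
    exact ⟨v, by simp⟩

end GroupWithZero

/-- Let `q ≡ 1 (mod 3)` and consider the multiset of products `t1·t2·t3` over all
3-element subsets of `F_q^*` (of total size `C(q-1,3)`). Then the number of these
products that are (nonzero) cubes equals `((q-1)/3)·((q²-5q+10)/6)`, and the number
that are non-cubes equals `(2(q-1)/3)·((q²-5q+4)/6)`. -/
theorem stmt12 (F : Type*) [Field F] [Fintype F] (q : ℕ) (hq : Fintype.card F = q)
    (hq3 : q % 3 = 1) :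
    (Nat.card {s : Finset F // (0 : F) ∉ s ∧ s.card = 3 ∧
        ∃ y : F, y ^ 3 = ∏ x ∈ s, x} : ℤ)
      = ((q : ℤ) - 1) / 3 * (((q : ℤ) ^ 2 - 5 * q + 10) / 6) ∧
    (Nat.card {s : Finset F // (0 : F) ∉ s ∧ s.card = 3 ∧
        ¬ ∃ y : F, y ^ 3 = ∏ x ∈ s, x} : ℤ)
      = 2 * (((q : ℤ) - 1) / 3) * (((q : ℤ) ^ 2 - 5 * q + 4) / 6) := by
  classical
  obtain ⟨m, rfl⟩ : ∃ m, q = 3 * m + 1 := ⟨q / 3, by omega⟩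
  set H := (powMonoidHom 3 : Fˣ →* Fˣ).range
  have hG : Fintype.card Fˣ = 3 * m := by simp [Fintype.card_units, hq]
  have hH : Nat.card H = m := by
    rw [IsCyclic.card_powMonoidHom_range, Nat.card_eq_fintype_card, hG]
    simp
  have hcube (t : Finset Fˣ) : (∃ y : F, y ^ 3 = ∏ x ∈ t.map ⟨Units.val, Units.val_injective⟩, x)
      ↔ ∏ x ∈ t, x ∈ H := by
    rw [prod_map, ← exists_pow_eq_units_val_iff three_ne_zero, Units.coe_prod]
    rfl
  have hindex : Fintype.card Fˣ = 3 * Nat.card H := by rw [hG, hH]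
  rw [natCard_subtype_zero_notMem_eq_units, natCard_subtype_zero_notMem_eq_units]
  simp only [card_map, hcube, natCard_card_eq_and_eq_card_filter]
  rw [H.card_filter_powersetCard_prod_mem (fun x => ⟨x, rfl⟩) hindex,
    H.card_filter_powersetCard_prod_notMem (fun x => ⟨x, rfl⟩) hindex, hH]
  have hchoose := Nat.two_mul_choose_two m
  zify [show 1 ≤ m from hH ▸ Nat.card_pos] at hchoose
  push_cast
  have e1 : (3 * (m : ℤ) + 1 - 1) / 3 = m := by omega
  have e2 : ((3 * (m : ℤ) + 1) ^ 2 - 5 * (3 * m + 1) + 10) / 6 = 3 * m.choose 2 + 1 :=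
    Int.ediv_eq_of_eq_mul_right (by norm_num) (by linear_combination -9 * hchoose)
  have e3 : ((3 * (m : ℤ) + 1) ^ 2 - 5 * (3 * m + 1) + 4) / 6 = 3 * m.choose 2 :=
    Int.ediv_eq_of_eq_mul_right (by norm_num) (by linear_combination -9 * hchoose)
  rw [e1, e2, e3]
  constructor <;> ring
end

section
/- Let q = 2^{2v+1} (so q even, q ≡ -1 mod 3). The number of unordered triples {t1,t2,t3} of pairwise distinct elements of F_q satisfying (t1+t2+t3) + (t1t2+t1t3+t2t3) = 0 equals (q^2-4q+4)/6. -/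
/-!
Count ordered triples instead of sets: every solution set is the underlying set of exactly six
ordered triples of distinct elements. In characteristic `2` the relation reads
`t₃ (1 + t₁ + t₂) = t₁ + t₂ + t₁ t₂`, and `1 + t₁ + t₂` never vanishes on a solution because
`x² + x + 1` has no root in `F` (`3 ∤ q - 1`). So a solution is determined by the pair `(t₁, t₂)`,
and a pair `(a, b)` occurs exactly when `b ∉ {a, 1 + a, a², √a}`. These four values are distinct
unless `a ∈ {0, 1}`, where they collapse to `{0, 1}`; hence there are `q² - 4(q - 2) - 4 = (q - 2)²`
ordered solutions, and `(q - 2)² / 6` solution sets.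
-/

open Finset

section Triples

variable {α : Type*} [DecidableEq α]

def triplePerms (a b c : α) : Finset (α × α × α) :=
  {(a, b, c), (a, c, b), (b, a, c), (b, c, a), (c, a, b), (c, b, a)}

lemma mem_triplePerms_iff {a b c : α} (hab : a ≠ b) (hac : a ≠ c) (hbc : b ≠ c) {x y z : α} :
    (x, y, z) ∈ triplePerms a b c ↔
      x ≠ y ∧ x ≠ z ∧ y ≠ z ∧ ({x, y, z} : Finset α) = {a, b, c} := by
  simp only [triplePerms, mem_insert, mem_singleton, Prod.mk.injEq]
  constructor
  · rintro (⟨rfl, rfl, rfl⟩ | ⟨rfl, rfl, rfl⟩ | ⟨rfl, rfl, rfl⟩ | ⟨rfl, rfl, rfl⟩ |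
      ⟨rfl, rfl, rfl⟩ | ⟨rfl, rfl, rfl⟩) <;>
      refine ⟨by grind, by grind, by grind, ?_⟩ <;> ext <;>
      simp only [mem_insert, mem_singleton] <;> tauto
  · rintro ⟨hxy, hxz, hyz, h⟩
    have hx : x ∈ ({a, b, c} : Finset α) := h ▸ by simp
    have hy : y ∈ ({a, b, c} : Finset α) := h ▸ by simp
    have hz : z ∈ ({a, b, c} : Finset α) := h ▸ by simp
    simp only [mem_insert, mem_singleton] at hx hy hz
    grind

lemma card_triplePerms {a b c : α} (hab : a ≠ b) (hac : a ≠ c) (hbc : b ≠ c) :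
    #(triplePerms a b c) = 6 := by
  simp [triplePerms, hab, hac, hbc, hab.symm, hac.symm, hbc.symm]

variable [Fintype α]

lemma card_distinct_triples_eq_six_mul (Q : Finset α → Prop) [DecidablePred Q] :
    #{p : α × α × α | p.1 ≠ p.2.1 ∧ p.1 ≠ p.2.2 ∧ p.2.1 ≠ p.2.2 ∧ Q {p.1, p.2.1, p.2.2}}
      = 6 * #{s : Finset α | #s = 3 ∧ Q s} := by
  rw [card_eq_sum_card_fiberwise (f := fun p : α × α × α => ({p.1, p.2.1, p.2.2} : Finset α))
    (t := {s : Finset α | #s = 3 ∧ Q s})]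
  · rw [sum_const_nat, mul_comm]
    intro s hs
    obtain ⟨hs3, hQ⟩ := (mem_filter.mp hs).2
    obtain ⟨a, b, c, hab, hac, hbc, rfl⟩ := card_eq_three.mp hs3
    rw [← card_triplePerms hab hac hbc]
    congr 1
    ext ⟨x, y, z⟩
    rw [mem_triplePerms_iff hab hac hbc]
    simp only [mem_filter, mem_univ, true_and]
    constructor
    · rintro ⟨⟨hxy, hxz, hyz, -⟩, h⟩
      exact ⟨hxy, hxz, hyz, h⟩
    · rintro ⟨hxy, hxz, hyz, h⟩
      exact ⟨⟨hxy, hxz, hyz, h ▸ hQ⟩, h⟩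
  · rintro ⟨x, y, z⟩ hp
    simp only [mem_coe, mem_filter, mem_univ, true_and] at hp ⊢
    obtain ⟨hxy, hxz, hyz, hQ⟩ := hp
    exact ⟨card_eq_three.mpr ⟨x, y, z, hxy, hxz, hyz, rfl⟩, hQ⟩

end Triples

lemma prod_one_add_insert_eq_iff {R : Type*} [CommRing R] [DecidableEq R] {x y z : R}
    (hxy : x ≠ y) (hxz : x ≠ z) (hyz : y ≠ z) :
    ∏ t ∈ {x, y, z}, (1 + t) = 1 + ∏ t ∈ {x, y, z}, t ↔
      (x + y + z) + (x * y + x * z + y * z) = 0 := by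
  rw [prod_insert (by simp [hxy, hxz]), prod_insert (by simp [hyz]), prod_singleton,
    prod_insert (by simp [hxy, hxz]), prod_insert (by simp [hyz]), prod_singleton]
  constructor <;> intro h <;> linear_combination h

/-- `e₁ + e₂ = 0` is `∏ (1 + t) = 1 + e₃`, which only depends on the set `{t₁, t₂, t₃}`. -/
lemma card_eq_three_and_exists_triple_iff {R : Type*} [CommRing R] [DecidableEq R] (s : Finset R) :
    (#s = 3 ∧ ∃ t1 t2 t3 : R, t1 ≠ t2 ∧ t1 ≠ t3 ∧ t2 ≠ t3 ∧ s = {t1, t2, t3} ∧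
        (t1 + t2 + t3) + (t1 * t2 + t1 * t3 + t2 * t3) = 0) ↔
      #s = 3 ∧ ∏ t ∈ s, (1 + t) = 1 + ∏ t ∈ s, t := by
  constructor
  · rintro ⟨hs, t1, t2, t3, h12, h13, h23, rfl, h⟩
    exact ⟨hs, (prod_one_add_insert_eq_iff h12 h13 h23).mpr h⟩
  · rintro ⟨hs, h⟩
    obtain ⟨t1, t2, t3, h12, h13, h23, rfl⟩ := card_eq_three.mp hs
    exact ⟨hs, t1, t2, t3, h12, h13, h23, rfl, (prod_one_add_insert_eq_iff h12 h13 h23).mp h⟩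

section CharTwoField

variable {F : Type*} [Field F]

def thirdPoint (a b : F) : F := (a + b + a * b) / (1 + a + b)

lemma thirdPoint_comm (a b : F) : thirdPoint a b = thirdPoint b a := by
  unfold thirdPoint; ring

lemma thirdPoint_eq_left_iff {a b : F} (h : 1 + a + b ≠ 0) : thirdPoint a b = a ↔ b = a ^ 2 := by
  rw [thirdPoint, div_eq_iff h]
  constructor <;> intro h' <;> linear_combination h'

variable [CharP F 2]

lemma sq_add_add_one_ne_zero (hcube : ∀ x : F, x ^ 3 = 1 → x = 1) (x : F) :
    x ^ 2 + x + 1 ≠ 0 := by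
  intro hx
  have h1 : x = 1 := hcube x (by linear_combination (x - 1) * hx)
  subst h1
  exact one_ne_zero (by linear_combination hx - CharTwo.two_eq_zero (R := F))

lemma eq_thirdPoint_iff {a b c : F} (h : 1 + a + b ≠ 0) :
    c = thirdPoint a b ↔ (a + b + c) + (a * b + a * c + b * c) = 0 := by
  rw [thirdPoint, eq_div_iff h, ← CharTwo.add_eq_zero]
  constructor <;> intro h' <;> linear_combination h'

lemma one_add_add_ne_zero (hroot : ∀ x : F, x ^ 2 + x + 1 ≠ 0) {a b c : F}
    (h : (a + b + c) + (a * b + a * c + b * c) = 0) : 1 + a + b ≠ 0 := by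
  intro hab
  have hb : b = 1 + a := by linear_combination hab - (1 + a) * CharTwo.two_eq_zero (R := F)
  subst hb
  exact hroot a (by linear_combination h - (a + c + a * c) * CharTwo.two_eq_zero (R := F))

variable [DecidableEq F]

lemma mem_excluded_iff {a b r : F} (hr : r ^ 2 = a) :
    b ∈ ({a, 1 + a, a ^ 2, r} : Finset F) ↔ ¬(a ≠ b ∧ 1 + a + b ≠ 0 ∧ b ≠ a ^ 2 ∧ a ≠ b ^ 2) := by
  have hsqrt : a = b ^ 2 ↔ b = r := by rw [← hr, eq_comm, CharTwo.sq_inj]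
  simp only [mem_insert, mem_singleton, ne_eq, CharTwo.add_eq_zero, hsqrt]
  grind

lemma card_excluded (hcube : ∀ x : F, x ^ 3 = 1 → x = 1) {a r : F} (hr : r ^ 2 = a)
    (ha0 : a ≠ 0) (ha1 : a ≠ 1) : #({a, 1 + a, a ^ 2, r} : Finset F) = 4 := by
  have hroot := sq_add_add_one_ne_zero hcube
  have hchar := CharTwo.two_eq_zero (R := F)
  have h1 : a ≠ 1 + a := fun h => one_ne_zero (by linear_combination -h)
  have h2 : a ≠ a ^ 2 := fun h => by
    rcases mul_eq_zero.mp (show a * (a - 1) = 0 by linear_combination -h) with h | h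
    exacts [ha0 h, ha1 (sub_eq_zero.mp h)]
  have h3 : a ≠ r := by rintro rfl; exact h2 hr.symm
  have h4 : 1 + a ≠ a ^ 2 := fun h => hroot a (by linear_combination -h + (1 + a) * hchar)
  have h5 : 1 + a ≠ r := by rintro rfl; exact hroot a (by linear_combination hr)
  have h6 : a ^ 2 ≠ r := by
    rintro rfl
    have : a * (a ^ 3 - 1) = 0 := by linear_combination hr
    exact ha1 (hcube a (sub_eq_zero.mp ((mul_eq_zero.mp this).resolve_left ha0)))
  rw [card_insert_of_notMem (by simp [h1, h2, h3]), card_insert_of_notMem (by simp [h4, h5]),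
    card_insert_of_notMem (by simp [h6]), card_singleton]

variable [Fintype F]

lemma card_admissible_pairs (hcube : ∀ x : F, x ^ 3 = 1 → x = 1) :
    (#{p : F × F | p.1 ≠ p.2 ∧ 1 + p.1 + p.2 ≠ 0 ∧ p.2 ≠ p.1 ^ 2 ∧ p.1 ≠ p.2 ^ 2} : ℤ)
      = (Fintype.card F - 2) ^ 2 := by
  choose sqrt hsqrt using Finite.injective_iff_surjective.mp (CharTwo.sq_injective (R := F))
  set V : F → Finset F := fun a => {a, 1 + a, a ^ 2, sqrt a}
  have hfiber (a : F) :
      #{b | a ≠ b ∧ 1 + a + b ≠ 0 ∧ b ≠ a ^ 2 ∧ a ≠ b ^ 2} = Fintype.card F - #(V a) := by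
    rw [← card_compl]
    congr 1
    ext b
    rw [mem_compl, mem_excluded_iff (hsqrt a), not_not, mem_filter, and_iff_right (mem_univ b)]
  have hV01 : ∑ a ∈ {0, 1}, #(V a) = 4 := by
    have h0 : sqrt 0 = 0 := CharTwo.sq_injective (by simpa using hsqrt 0)
    have h1 : sqrt 1 = 1 := CharTwo.sq_injective (by simpa using hsqrt 1)
    have h11 : (1 : F) + 1 = 0 := CharTwo.add_self_eq_zero 1
    simp [V, sum_pair zero_ne_one, h0, h1, h11]
  have hV : ∑ a, (#(V a) : ℤ) = 4 * Fintype.card F - 4 := by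
    have hgeneric : ∀ a ∈ univ \ {0, 1}, (#(V a) : ℤ) = 4 := fun a ha => by
      simp only [mem_sdiff, mem_univ, mem_insert, mem_singleton, true_and, not_or] at ha
      rw [card_excluded hcube (hsqrt a) ha.1 ha.2, Nat.cast_ofNat]
    rw [← sum_sdiff (subset_univ {0, 1}), sum_congr rfl hgeneric, sum_const,
      card_sdiff_of_subset (subset_univ _), card_univ, card_pair zero_ne_one, nsmul_eq_mul,
      ← Nat.cast_sum, hV01]
    have := Fintype.one_lt_card (α := F)
    omega
  rw [card_filter, Fintype.sum_prod_type]
  simp only [← card_filter, hfiber]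
  push_cast [Nat.cast_sub (card_le_univ _)]
  rw [sum_sub_distrib, hV, sum_const, card_univ]
  ring

lemma card_solutions_eq_card_admissible_pairs (hroot : ∀ x : F, x ^ 2 + x + 1 ≠ 0) :
    #{p : F × F × F | p.1 ≠ p.2.1 ∧ p.1 ≠ p.2.2 ∧ p.2.1 ≠ p.2.2 ∧
        (p.1 + p.2.1 + p.2.2) + (p.1 * p.2.1 + p.1 * p.2.2 + p.2.1 * p.2.2) = 0}
      = #{p : F × F | p.1 ≠ p.2 ∧ 1 + p.1 + p.2 ≠ 0 ∧ p.2 ≠ p.1 ^ 2 ∧ p.1 ≠ p.2 ^ 2} := by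
  have hswap {a b : F} (h : 1 + a + b ≠ 0) : 1 + b + a ≠ 0 := by rwa [add_right_comm]
  refine card_nbij' (fun p => (p.1, p.2.1)) (fun p => (p.1, p.2, thirdPoint p.1 p.2))
    ?_ ?_ ?_ fun p _ => rfl
  · rintro ⟨a, b, c⟩ hp
    simp only [mem_coe, mem_filter, mem_univ, true_and] at hp ⊢
    obtain ⟨hab, hac, hbc, h⟩ := hp
    have hd := one_add_add_ne_zero hroot h
    have hc := (eq_thirdPoint_iff hd).mpr h
    refine ⟨hab, hd, fun hb => hac ?_, fun ha => hbc ?_⟩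
    · rw [hc, eq_comm, thirdPoint_eq_left_iff hd, hb]
    · rw [hc, eq_comm, thirdPoint_comm, thirdPoint_eq_left_iff (hswap hd), ha]
  · rintro ⟨a, b⟩ hp
    simp only [mem_coe, mem_filter, mem_univ, true_and] at hp ⊢
    obtain ⟨hab, hd, hb, ha⟩ := hp
    refine ⟨hab, fun h => hb ?_, fun h => ha ?_, (eq_thirdPoint_iff hd).mp rfl⟩
    · exact (thirdPoint_eq_left_iff hd).mp h.symm
    · rw [thirdPoint_comm] at h
      exact (thirdPoint_eq_left_iff (hswap hd)).mp h.symm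
  · rintro ⟨a, b, c⟩ hp
    simp only [mem_coe, mem_filter, mem_univ, true_and] at hp
    obtain ⟨-, -, -, h⟩ := hp
    rw [(eq_thirdPoint_iff (one_add_add_ne_zero hroot h)).mpr h]

end CharTwoField

lemma FiniteField.eq_one_of_pow_eq_one_of_coprime {K : Type*} [Field K] [Fintype K] {n : ℕ}
    (hn : n ≠ 0) (hcop : n.Coprime (Fintype.card K - 1)) {x : K} (hx : x ^ n = 1) : x = 1 := by
  have hx0 : x ≠ 0 := by rintro rfl; simp [zero_pow hn] at hx
  exact (pow_eq_one_iff_of_coprime hcop).mp ⟨hx, FiniteField.pow_card_sub_one_eq_one x hx0⟩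

lemma Nat.coprime_three_two_pow_odd_sub_one (v : ℕ) : Nat.Coprime 3 (2 ^ (2 * v + 1) - 1) := by
  have h : 2 ^ (2 * v + 1) % 3 = 2 := by
    rw [pow_succ, pow_mul, Nat.mul_mod, Nat.pow_mod]; norm_num
  rw [Nat.Prime.coprime_iff_not_dvd Nat.prime_three]
  generalize 2 ^ (2 * v + 1) = q at h ⊢
  omega

/-- Let `q = 2^(2v+1)`. The number of unordered triples `{t1,t2,t3}` of pairwise distinct
elements of `F_q` satisfying `(t1+t2+t3) + (t1t2+t1t3+t2t3) = 0` equals `(q²-4q+4)/6`. -/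
theorem stmt14 (F : Type*) [Field F] [Fintype F] [DecidableEq F] (q v : ℕ)
    (hq : Fintype.card F = q) (hqv : q = 2 ^ (2 * v + 1)) :
    (Nat.card {s : Finset F // s.card = 3 ∧ ∃ t1 t2 t3 : F, t1 ≠ t2 ∧ t1 ≠ t3 ∧ t2 ≠ t3 ∧
        s = {t1, t2, t3} ∧ (t1 + t2 + t3) + (t1 * t2 + t1 * t3 + t2 * t3) = 0} : ℤ)
      = ((q : ℤ) ^ 2 - 4 * q + 4) / 6 := by
  have : CharP F 2 := charP_of_card_eq_prime_pow (hq.trans hqv)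
  have hcube (x : F) : x ^ 3 = 1 → x = 1 := FiniteField.eq_one_of_pow_eq_one_of_coprime
    three_ne_zero (hq ▸ hqv ▸ Nat.coprime_three_two_pow_odd_sub_one v)
  have hsets : Nat.card {s : Finset F // s.card = 3 ∧ ∃ t1 t2 t3 : F, t1 ≠ t2 ∧ t1 ≠ t3 ∧
      t2 ≠ t3 ∧ s = {t1, t2, t3} ∧ (t1 + t2 + t3) + (t1 * t2 + t1 * t3 + t2 * t3) = 0}
      = #{s : Finset F | #s = 3 ∧ ∏ t ∈ s, (1 + t) = 1 + ∏ t ∈ s, t} := by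
    rw [Nat.card_eq_fintype_card, Fintype.card_subtype]
    simp only [card_eq_three_and_exists_triple_iff]
  have htriples := card_distinct_triples_eq_six_mul
    (fun s : Finset F => ∏ t ∈ s, (1 + t) = 1 + ∏ t ∈ s, t)
  rw [filter_congr fun p _ => and_congr_right fun h12 => and_congr_right fun h13 =>
      and_congr_right fun h23 => prod_one_add_insert_eq_iff h12 h13 h23,
    card_solutions_eq_card_admissible_pairs (sq_add_add_one_ne_zero hcube)] at htriples
  have hcount := card_admissible_pairs hcube
  rw [htriples, hq] at hcount
  rw [hsets, show (q : ℤ) ^ 2 - 4 * q + 4 = (q - 2) ^ 2 by ring, ← hcount]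
  push_cast
  omega
end

section
/- Let μ = (q^2-3q+2)/6 for q ≢ 0 (mod 3) (and μ = (q^2-3q)/6 for q ≡ 0 mod 3), and let C be the [q+1, q-3, 5]_q generalized doubly-extended Reed-Solomon code of covering radius 3 whose parity-check matrix has as columns the points of the twisted cubic. Then the μ-density γ_μ(C,3,q) = [C(q+1,3)(q-1)^3 - C(5,2)(q-1)C(q+1,5)] / [μ(q^4 - 1 - (q^2-1) - C(q+1,2)(q-1)^2)] satisfies γ_μ(C,3,q) > 1 and γ_μ(C,3,q) → 1 as q → ∞. -/
open Filter

/-- The value of `μ`: `(q²-3q+2)/6` for `q ≢ 0 (mod 3)` and `(q²-3q)/6` for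
`q ≡ 0 (mod 3)`. -/
noncomputable def muQ (q : ℕ) : ℚ :=
  if q % 3 = 0 then ((q : ℚ) ^ 2 - 3 * q) / 6 else ((q : ℚ) ^ 2 - 3 * q + 2) / 6

/-- The `μ`-density `γ_μ(C,3,q)` of the `[q+1, q-3, 5]_q` GDRS code `C` of covering
radius `3` associated with the twisted cubic:
`γ_μ = [C(q+1,3)(q-1)³ - C(5,2)(q-1)C(q+1,5)] / [μ(q⁴ - 1 - (q²-1) - C(q+1,2)(q-1)²)]`. -/
noncomputable def gammaMu (q : ℕ) : ℚ :=
  (((q + 1).choose 3 : ℚ) * ((q : ℚ) - 1) ^ 3 -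
      ((5).choose 2 : ℚ) * ((q : ℚ) - 1) * ((q + 1).choose 5 : ℚ)) /
    (muQ q * ((q : ℚ) ^ 4 - 1 - ((q : ℚ) ^ 2 - 1) -
      ((q + 1).choose 2 : ℚ) * ((q : ℚ) - 1) ^ 2))

/-! The two sphere-counting terms factor: the numerator of `gammaMu q` is
`(q+1) q (q-1)² (q²+q-4) / 12` and the bracket in its denominator is `q (q-1) (q+1)² / 2`,
so `γ_μ = (q-1)(q²+q-4) / (6 (q+1) μ)`. As `q (q-3) ≤ 6 μ ≤ (q-1)(q-2)`, this gives
`1 < γ_μ ≤ 1 + 4/q`, and the limit follows by squeezing. -/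

open Polynomial in
lemma Nat.cast_choose_three {K : Type*} [DivisionRing K] [CharZero K] (n : ℕ) :
    (n.choose 3 : K) = n * (n - 1) * (n - 2) / 6 := by
  rw [Nat.cast_choose_eq_descPochhammer_div]
  simp [descPochhammer_succ_eval, Nat.factorial]

open Polynomial in
lemma Nat.cast_choose_five {K : Type*} [DivisionRing K] [CharZero K] (n : ℕ) :
    (n.choose 5 : K) = n * (n - 1) * (n - 2) * (n - 3) * (n - 4) / 120 := by
  rw [Nat.cast_choose_eq_descPochhammer_div]
  simp [descPochhammer_succ_eval, Nat.factorial]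

lemma gammaMu_numerator_eq (q : ℕ) :
    ((q + 1).choose 3 : ℚ) * ((q : ℚ) - 1) ^ 3 -
        ((5).choose 2 : ℚ) * ((q : ℚ) - 1) * ((q + 1).choose 5 : ℚ) =
      (q + 1) * q * (q - 1) ^ 2 * (q ^ 2 + q - 4) / 12 := by
  rw [Nat.cast_choose_three, Nat.cast_choose_five, Nat.cast_choose_two]
  push_cast
  ring

lemma gammaMu_denominator_eq (q : ℕ) :
    (q : ℚ) ^ 4 - 1 - ((q : ℚ) ^ 2 - 1) - ((q + 1).choose 2 : ℚ) * ((q : ℚ) - 1) ^ 2 =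
      q * (q - 1) * (q + 1) ^ 2 / 2 := by
  rw [Nat.cast_choose_two]
  push_cast
  ring

lemma gammaMu_eq {q : ℕ} (hq : 2 ≤ q) :
    gammaMu q = (q - 1) * (q ^ 2 + q - 4) / (6 * (q + 1) * muQ q) := by
  have hq' : (2 : ℚ) ≤ q := by exact_mod_cast hq
  rw [gammaMu, gammaMu_numerator_eq, gammaMu_denominator_eq]
  rcases eq_or_ne (muQ q) 0 with hμ | hμ
  · simp [hμ]
  · have hq1 : (q : ℚ) - 1 ≠ 0 := by linarith
    rw [div_eq_div_iff (by positivity) (by positivity)]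
    ring

lemma le_muQ (q : ℕ) : ((q : ℚ) ^ 2 - 3 * q) / 6 ≤ muQ q := by
  unfold muQ
  split_ifs <;> linarith

lemma muQ_le (q : ℕ) : muQ q ≤ ((q : ℚ) ^ 2 - 3 * q + 2) / 6 := by
  unfold muQ
  split_ifs <;> linarith

lemma muQ_pos {q : ℕ} (hq : 4 ≤ q) : 0 < muQ q := by
  have hq' : (4 : ℚ) ≤ q := by exact_mod_cast hq
  nlinarith [le_muQ q]

lemma one_lt_gammaMu {q : ℕ} (hq : 4 ≤ q) : 1 < gammaMu q := by
  have hq' : (4 : ℚ) ≤ q := by exact_mod_cast hq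
  have hμ := muQ_pos hq
  rw [gammaMu_eq (by omega), one_lt_div (by positivity)]
  nlinarith [muQ_le q]

lemma gammaMu_le_one_add {q : ℕ} (hq : 5 ≤ q) : gammaMu q ≤ 1 + 4 / q := by
  have hq' : (5 : ℚ) ≤ q := by exact_mod_cast hq
  have hμ := muQ_pos (by omega : 4 ≤ q)
  have hcross : (q - 1) * (q ^ 2 + q - 4) * q ≤ (q + 4) * (6 * (q + 1) * muQ q) := by
    nlinarith [le_muQ q]
  rw [gammaMu_eq (by omega), one_add_div (by positivity), div_le_div_iff₀ (by positivity)
    (by positivity)]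
  linarith

/-- The `μ`-density of the GDRS `[q+1,q-3,5]_q 3` code associated with the twisted cubic
satisfies `γ_μ(C,3,q) > 1` and `γ_μ(C,3,q) → 1` as `q → ∞`: an asymptotically optimal
collection of multiple covering codes. -/
theorem stmt19 :
    (∀ q : ℕ, 5 ≤ q → 1 < gammaMu q) ∧
    Tendsto gammaMu atTop (nhds 1) := by
  refine ⟨fun q hq => one_lt_gammaMu (by omega), ?_⟩
  have hupper := (tendsto_const_div_atTop_nhds_zero_nat (4 : ℚ)).const_add 1
  rw [add_zero] at hupper
  refine tendsto_of_tendsto_of_tendsto_of_le_of_le' tendsto_const_nhds hupper ?_ ?_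
  · filter_upwards [eventually_ge_atTop 4] with q hq using (one_lt_gammaMu hq).le
  · filter_upwards [eventually_ge_atTop 5] with q hq using gammaMu_le_one_add hq
end
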